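/- Mutual information characterization of the KL contraction coefficient: for any channel K from a finite alphabet 𝒳 to a finite alphabet 𝒴, η_KL(K) equals the supremum of I(U; Y)/I(U; X) over all Markov chains U → X → Y in which U takes values in a finite set, the conditional law of Y given X is K, and I(U; X) > 0. -/

import Mathlib

/-!
Writing `I(U;X) = ∑ᵤ P_U(u) D(P_{X|U=u} ‖ P_X)` and, since `P_{Y|U=u} = K ∘ P_{X|U=u}` and
`P_Y = K ∘ P_X`, `I(U;Y) = ∑ᵤ P_U(u) D(K ∘ P_{X|U=u} ‖ K ∘ P_X)`, the bound
`D(K ∘ P ‖ K ∘ Q) ≤ η_KL(K) D(P ‖ Q)` gives `I(U;Y) ≤ η_KL(K) I(U;X)`.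

Conversely, let `U ~ Bernoulli(t)` with `P_{X|U=1} = P` and `P_{X|U=0} = Q`. Then
`I(U;X) = t D(P ‖ M_t) + (1 - t) D(Q ‖ M_t)` with `M_t = t P + (1 - t) Q`; the first term is
`t D(P ‖ Q) + o(t)` by continuity and the second is `o(t)` because `t ↦ D(Q ‖ M_t)` vanishes with
zero derivative at `t = 0`. The same holds after the channel, so `I(U;Y) / I(U;X)` tends to
`D(K ∘ P ‖ K ∘ Q) / D(P ‖ Q)` as `t → 0⁺`.
-/

/-- Kullback–Leibler divergence between two distributions on a finite alphabet. -/
noncomputable def klDiv {X : Type*} [Fintype X] (P Q : X → ℝ) : ℝ :=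
  ∑ x, P x * Real.log (P x / Q x)

/-- `P` is a probability distribution on the finite alphabet `X`. -/
def IsProbDist {X : Type*} [Fintype X] (P : X → ℝ) : Prop :=
  (∀ x, 0 ≤ P x) ∧ ∑ x, P x = 1

/-- `K` is a channel (Markov kernel) from `X` to `Y`. -/
def IsChannel {X Y : Type*} [Fintype Y] (K : X → Y → ℝ) : Prop :=
  (∀ x y, 0 ≤ K x y) ∧ ∀ x, ∑ y, K x y = 1

/-- Pushforward `K ∘ P` of a distribution `P` through a channel `K`. -/
noncomputable def pushforward {X Y : Type*} [Fintype X] (K : X → Y → ℝ) (P : X → ℝ) :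
    Y → ℝ := fun y => ∑ x, P x * K x y

/-- The Kullback–Leibler contraction coefficient of a channel `K`. -/
noncomputable def etaKL {X Y : Type*} [Fintype X] [Fintype Y] (K : X → Y → ℝ) : ℝ :=
  sSup {r : ℝ | ∃ P Q : X → ℝ, IsProbDist P ∧ IsProbDist Q ∧
    (∀ x, Q x = 0 → P x = 0) ∧ 0 < klDiv P Q ∧
    r = klDiv (pushforward K P) (pushforward K Q) / klDiv P Q}

/-- Mutual information of a joint distribution `J` on `A × B`: the KL divergence
between the joint law and the product of its marginals. -/
noncomputable def mutInfo {A B : Type*} [Fintype A] [Fintype B] (J : A × B → ℝ) : ℝ :=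
  klDiv J (fun p => (∑ b, J (p.1, b)) * (∑ a, J (a, p.2)))

open Real Filter Topology

theorem mul_log_sum_div_sum_le_sum_mul_log_div {ι : Type*} (s : Finset ι) {a b : ι → ℝ}
    (ha : ∀ i ∈ s, 0 ≤ a i) (hb : ∀ i ∈ s, 0 ≤ b i) (hab : ∀ i ∈ s, b i = 0 → a i = 0) :
    (∑ i ∈ s, a i) * log ((∑ i ∈ s, a i) / ∑ i ∈ s, b i) ≤ ∑ i ∈ s, a i * log (a i / b i) := by
  -- Jensen's inequality for `x log x` with weights `b i / B` at the points `a i / b i`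
  set A := ∑ i ∈ s, a i
  set B := ∑ i ∈ s, b i
  rcases (show 0 ≤ B from Finset.sum_nonneg hb).eq_or_lt with hB | hB
  · rw [← hB, div_zero, log_zero, mul_zero]
    refine (Finset.sum_eq_zero fun i hi => ?_).ge
    rw [(Finset.sum_eq_zero_iff_of_nonneg hb).1 hB.symm i hi, div_zero, log_zero, mul_zero]
  have hterm : ∀ i ∈ s,
      (b i / B) • (a i / b i * log (a i / b i)) = a i * log (a i / b i) / B := by
    intro i hi
    rcases eq_or_ne (b i) 0 with h | h
    · simp [h, hab i hi h]
    · rw [smul_eq_mul]; field_simp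
  have hmean : ∑ i ∈ s, (b i / B) • (a i / b i) = A / B := by
    rw [Finset.sum_div]
    refine Finset.sum_congr rfl fun i hi => ?_
    rcases eq_or_ne (b i) 0 with h | h
    · simp [h, hab i hi h]
    · rw [smul_eq_mul]; field_simp
  have hjensen := convexOn_mul_log.map_sum_le (t := s) (w := fun i => b i / B)
    (p := fun i => a i / b i) (fun i hi => div_nonneg (hb i hi) hB.le)
    (by rw [← Finset.sum_div, div_self hB.ne']) (fun i hi => div_nonneg (ha i hi) (hb i hi))
  rw [hmean, Finset.sum_congr rfl hterm, ← Finset.sum_div] at hjensen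
  have hB0 : B ≠ 0 := hB.ne'
  calc A * log (A / B) = B * (A / B * log (A / B)) := by field_simp
    _ ≤ B * ((∑ i ∈ s, a i * log (a i / b i)) / B) := by gcongr
    _ = ∑ i ∈ s, a i * log (a i / b i) := by field_simp

theorem klDiv_nonneg {X : Type*} [Fintype X] {P Q : X → ℝ} (hP : IsProbDist P)
    (hQ : IsProbDist Q) (hPQ : ∀ x, Q x = 0 → P x = 0) : 0 ≤ klDiv P Q := by
  have h := mul_log_sum_div_sum_le_sum_mul_log_div Finset.univ (fun x _ => hP.1 x)
    (fun x _ => hQ.1 x) (fun x _ => hPQ x)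
  rwa [hP.2, hQ.2, div_one, log_one, mul_zero] at h

theorem isProbDist_pushforward {X Y : Type*} [Fintype X] [Fintype Y] {K : X → Y → ℝ}
    (hK : IsChannel K) {P : X → ℝ} (hP : IsProbDist P) : IsProbDist (pushforward K P) := by
  refine ⟨fun y => Finset.sum_nonneg fun x _ => mul_nonneg (hP.1 x) (hK.1 x y), ?_⟩
  simp only [pushforward]
  rw [Finset.sum_comm]
  simp only [← Finset.mul_sum, hK.2, mul_one, hP.2]

theorem pushforward_eq_zero_of_eq_zero {X Y : Type*} [Fintype X] [Fintype Y] {K : X → Y → ℝ}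
    (hK : IsChannel K) {P Q : X → ℝ} (hQ : ∀ x, 0 ≤ Q x) (hPQ : ∀ x, Q x = 0 → P x = 0) {y : Y}
    (hy : pushforward K Q y = 0) : pushforward K P y = 0 := by
  have h := (Finset.sum_eq_zero_iff_of_nonneg fun x _ => mul_nonneg (hQ x) (hK.1 x y)).1 hy
  refine Finset.sum_eq_zero fun x hx => ?_
  rcases mul_eq_zero.1 (h x hx) with h0 | h0
  · rw [hPQ x h0, zero_mul]
  · rw [h0, mul_zero]

theorem klDiv_pushforward_le {X Y : Type*} [Fintype X] [Fintype Y] {K : X → Y → ℝ}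
    (hK : IsChannel K) {P Q : X → ℝ} (hP : ∀ x, 0 ≤ P x) (hQ : ∀ x, 0 ≤ Q x)
    (hPQ : ∀ x, Q x = 0 → P x = 0) :
    klDiv (pushforward K P) (pushforward K Q) ≤ klDiv P Q := by
  have hsplit : klDiv P Q =
      ∑ y, ∑ x, P x * K x y * log (P x * K x y / (Q x * K x y)) := by
    rw [Finset.sum_comm]
    refine Finset.sum_congr rfl fun x _ => ?_
    have hterm : ∀ y, P x * K x y * log (P x * K x y / (Q x * K x y)) =
        K x y * (P x * log (P x / Q x)) := fun y => by
      rcases eq_or_ne (K x y) 0 with h | h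
      · simp [h]
      · rw [mul_div_mul_right _ _ h]; ring
    simp only [hterm, ← Finset.sum_mul, hK.2 x, one_mul]
  rw [hsplit]
  refine Finset.sum_le_sum fun y _ => mul_log_sum_div_sum_le_sum_mul_log_div _
    (fun x _ => mul_nonneg (hP x) (hK.1 x y)) (fun x _ => mul_nonneg (hQ x) (hK.1 x y))
    fun x _ h => ?_
  rcases mul_eq_zero.1 h with h0 | h0
  · rw [hPQ x h0, zero_mul]
  · rw [h0, mul_zero]

section Marginals

variable {U X Y : Type*}

def fstMarginal [Fintype X] (J : U × X → ℝ) (u : U) : ℝ := ∑ x, J (u, x)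

def sndMarginal [Fintype U] (J : U × X → ℝ) (x : X) : ℝ := ∑ u, J (u, x)

noncomputable def condDist [Fintype X] (J : U × X → ℝ) (u : U) (x : X) : ℝ :=
  J (u, x) / fstMarginal J u

/-- `P_{UY}` for the Markov chain `U → X → Y` with `P_{UX} = J` and `P_{Y|X} = K`. -/
def outputJoint [Fintype X] (K : X → Y → ℝ) (J : U × X → ℝ) : U × Y → ℝ :=
  fun p => ∑ x, J (p.1, x) * K x p.2

-- No hypothesis on `J`: where `fstMarginal J u = 0`, both sides vanish as `x / 0 = 0` and
-- `log 0 = 0`.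
theorem mutInfo_eq_sum_fstMarginal_mul_klDiv [Fintype U] [Fintype X] (J : U × X → ℝ) :
    mutInfo J = ∑ u, fstMarginal J u * klDiv (condDist J u) (sndMarginal J) := by
  change klDiv J (fun p => fstMarginal J p.1 * sndMarginal J p.2) = _
  rw [klDiv, Fintype.sum_prod_type]
  refine Finset.sum_congr rfl fun u _ => ?_
  rw [klDiv, Finset.mul_sum]
  refine Finset.sum_congr rfl fun x _ => ?_
  rcases eq_or_ne (fstMarginal J u) 0 with h | h
  · simp [h]
  · simp only [condDist]
    rw [← mul_assoc, mul_div_cancel₀ _ h, div_div]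

theorem isProbDist_sndMarginal [Fintype U] [Fintype X] {J : U × X → ℝ}
    (hJ : IsProbDist J) : IsProbDist (sndMarginal J) :=
  ⟨fun x => Finset.sum_nonneg fun u _ => hJ.1 (u, x),
    by simp only [sndMarginal]; rw [Finset.sum_comm, ← Fintype.sum_prod_type, hJ.2]⟩

theorem isProbDist_condDist [Fintype U] [Fintype X] {J : U × X → ℝ} (hJ : IsProbDist J)
    {u : U} (hu : fstMarginal J u ≠ 0) : IsProbDist (condDist J u) :=
  ⟨fun x => div_nonneg (hJ.1 _) (Finset.sum_nonneg fun x _ => hJ.1 _),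
    by simp only [condDist]; rw [← Finset.sum_div]; exact div_self hu⟩

theorem condDist_eq_zero_of_sndMarginal_eq_zero [Fintype U] [Fintype X] {J : U × X → ℝ}
    (hJ : ∀ p, 0 ≤ J p) (u : U) {x : X} (hx : sndMarginal J x = 0) : condDist J u x = 0 := by
  rw [condDist, (Finset.sum_eq_zero_iff_of_nonneg fun u _ => hJ (u, x)).1 hx u
    (Finset.mem_univ u), zero_div]

theorem fstMarginal_outputJoint [Fintype X] [Fintype Y] {K : X → Y → ℝ} (hK : IsChannel K)
    (J : U × X → ℝ) :
    fstMarginal (outputJoint K J) = fstMarginal J := by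
  funext u
  simp only [fstMarginal, outputJoint]
  rw [Finset.sum_comm]
  simp only [← Finset.mul_sum, hK.2, mul_one]

theorem sndMarginal_outputJoint [Fintype U] [Fintype X] (K : X → Y → ℝ) (J : U × X → ℝ) :
    sndMarginal (outputJoint K J) = pushforward K (sndMarginal J) := by
  funext y
  simp only [sndMarginal, outputJoint, pushforward, Finset.sum_mul]
  exact Finset.sum_comm

theorem condDist_outputJoint [Fintype X] [Fintype Y] {K : X → Y → ℝ} (hK : IsChannel K)
    (J : U × X → ℝ) (u : U) :
    condDist (outputJoint K J) u = pushforward K (condDist J u) := by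
  funext y
  simp only [condDist, fstMarginal_outputJoint hK, outputJoint, pushforward, Finset.sum_div]
  exact Finset.sum_congr rfl fun x _ => mul_div_right_comm _ _ _

theorem mutInfo_outputJoint_le [Fintype U] [Fintype X] [Fintype Y] {K : X → Y → ℝ}
    (hK : IsChannel K) {J : U × X → ℝ} (hJ : IsProbDist J) {c : ℝ}
    (hc : ∀ P Q : X → ℝ, IsProbDist P → IsProbDist Q → (∀ x, Q x = 0 → P x = 0) →
      klDiv (pushforward K P) (pushforward K Q) ≤ c * klDiv P Q) :
    mutInfo (outputJoint K J) ≤ c * mutInfo J := by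
  rw [mutInfo_eq_sum_fstMarginal_mul_klDiv, mutInfo_eq_sum_fstMarginal_mul_klDiv,
    Finset.mul_sum, fstMarginal_outputJoint hK, sndMarginal_outputJoint]
  refine Finset.sum_le_sum fun u _ => ?_
  rcases eq_or_ne (fstMarginal J u) 0 with h | h
  · simp [h]
  rw [condDist_outputJoint hK, mul_left_comm]
  exact mul_le_mul_of_nonneg_left
    (hc _ _ (isProbDist_condDist hJ h) (isProbDist_sndMarginal hJ) fun _ =>
      condDist_eq_zero_of_sndMarginal_eq_zero hJ.1 u)
    (Finset.sum_nonneg fun x _ => hJ.1 _)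

theorem exists_klDiv_condDist_pos [Fintype U] [Fintype X] {J : U × X → ℝ} (hJ : ∀ p, 0 ≤ J p)
    (h : 0 < mutInfo J) :
    ∃ u, fstMarginal J u ≠ 0 ∧ 0 < klDiv (condDist J u) (sndMarginal J) := by
  rw [mutInfo_eq_sum_fstMarginal_mul_klDiv] at h
  obtain ⟨u, -, hu⟩ := Finset.exists_lt_of_sum_lt (s := Finset.univ) (f := fun _ => (0 : ℝ))
    (by simpa using h)
  refine ⟨u, fun h0 => by simp [h0] at hu, pos_of_mul_pos_right hu ?_⟩
  exact Finset.sum_nonneg fun x _ => hJ _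

end Marginals

section Bernoulli

variable {X : Type*}

def mixture (t : ℝ) (P Q : X → ℝ) (x : X) : ℝ := t * P x + (1 - t) * Q x

/-- The joint law of `(U, X)` with `U ~ Bernoulli(t)`, `P_{X|U=true} = P`, `P_{X|U=false} = Q`. -/
def bernoulliJoint (t : ℝ) (P Q : X → ℝ) : Bool × X → ℝ :=
  fun p => if p.1 then t * P p.2 else (1 - t) * Q p.2

@[simp]
theorem mixture_zero (P Q : X → ℝ) : mixture 0 P Q = Q := by
  funext x
  simp [mixture]

theorem klDiv_self [Fintype X] (P : X → ℝ) : klDiv P P = 0 :=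
  Finset.sum_eq_zero fun x _ => by
    rcases eq_or_ne (P x) 0 with h | h <;> simp [h]

theorem isProbDist_bernoulliJoint [Fintype X] {t : ℝ} (ht0 : 0 ≤ t) (ht1 : t ≤ 1)
    {P Q : X → ℝ} (hP : IsProbDist P) (hQ : IsProbDist Q) :
    IsProbDist (bernoulliJoint t P Q) := by
  refine ⟨fun ⟨b, x⟩ => ?_, ?_⟩
  · cases b
    · exact mul_nonneg (by linarith) (hQ.1 x)
    · exact mul_nonneg ht0 (hP.1 x)
  · simp only [bernoulliJoint, Fintype.sum_prod_type, Fintype.sum_bool, if_true,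
      Bool.false_eq_true, if_false, ← Finset.mul_sum, hP.2, hQ.2]
    ring

theorem outputJoint_bernoulliJoint [Fintype X] {Y : Type*} (K : X → Y → ℝ) (t : ℝ)
    (P Q : X → ℝ) :
    outputJoint K (bernoulliJoint t P Q) =
      bernoulliJoint t (pushforward K P) (pushforward K Q) := by
  funext ⟨b, y⟩
  cases b <;> simp [outputJoint, bernoulliJoint, pushforward, Finset.mul_sum, mul_assoc]

theorem mutInfo_bernoulliJoint [Fintype X] {P Q : X → ℝ} (hP : ∑ x, P x = 1)
    (hQ : ∑ x, Q x = 1) {t : ℝ} (ht0 : t ≠ 0) (ht1 : t ≠ 1) :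
    mutInfo (bernoulliJoint t P Q) =
      t * klDiv P (mixture t P Q) + (1 - t) * klDiv Q (mixture t P Q) := by
  have ht1' : 1 - t ≠ 0 := sub_ne_zero.2 ht1.symm
  have hfst : fstMarginal (bernoulliJoint t P Q) = fun b => if b then t else 1 - t := by
    funext b
    cases b <;> simp [fstMarginal, bernoulliJoint, ← Finset.mul_sum, hP, hQ]
  have hsnd : sndMarginal (bernoulliJoint t P Q) = mixture t P Q := by
    funext x
    simp [sndMarginal, bernoulliJoint, mixture]
  have hcond_true : condDist (bernoulliJoint t P Q) true = P := by
    funext x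
    simp [condDist, hfst, bernoulliJoint, mul_div_cancel_left₀ _ ht0]
  have hcond_false : condDist (bernoulliJoint t P Q) false = Q := by
    funext x
    simp [condDist, hfst, bernoulliJoint, mul_div_cancel_left₀ _ ht1']
  rw [mutInfo_eq_sum_fstMarginal_mul_klDiv, Fintype.sum_bool, hcond_true, hcond_false, hsnd,
    hfst]
  simp

theorem continuousAt_klDiv_mixture [Fintype X] {P Q : X → ℝ}
    (hPQ : ∀ x, Q x = 0 → P x = 0) : ContinuousAt (fun t => klDiv P (mixture t P Q)) 0 := by
  refine tendsto_finsetSum _ fun x _ => ?_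
  rcases eq_or_ne (P x) 0 with h | h
  · simp only [h, zero_mul]
    exact tendsto_const_nhds
  have hQx : Q x ≠ 0 := fun h0 => h (hPQ x h0)
  refine ContinuousAt.tendsto ?_
  simp only [mixture]
  fun_prop (disch := simp [h, hQx])

theorem hasDerivAt_klDiv_mixture [Fintype X] {P Q : X → ℝ} (hPQsum : ∑ x, P x = ∑ x, Q x)
    (hPQ : ∀ x, Q x = 0 → P x = 0) : HasDerivAt (fun t => klDiv Q (mixture t P Q)) 0 0 := by
  have hterm : ∀ x, HasDerivAt (fun t => Q x * log (Q x / mixture t P Q x)) (Q x - P x) 0 := by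
    intro x
    rcases eq_or_ne (Q x) 0 with h | h
    · simpa [h, hPQ x h] using hasDerivAt_const (0 : ℝ) (0 : ℝ)
    have hmix : HasDerivAt (fun t => mixture t P Q x) (P x - Q x) 0 := by
      have hlin : (fun t => mixture t P Q x) = fun t => Q x + t * (P x - Q x) := by
        funext t
        simp only [mixture]
        ring
      simpa [hlin] using ((hasDerivAt_id (0 : ℝ)).mul_const (P x - Q x)).const_add (Q x)
    have hlog := (((hasDerivAt_const (0 : ℝ) (Q x)).fun_div hmix (by simpa [mixture] using h)).log
      (by simpa [mixture] using h)).const_mul (Q x)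
    refine hlog.congr_deriv ?_
    rw [mixture_zero]
    field_simp
    ring
  have hsum := HasDerivAt.fun_sum (u := Finset.univ) fun x _ => hterm x
  rwa [Finset.sum_sub_distrib, hPQsum, sub_self] at hsum

theorem tendsto_mutInfo_bernoulliJoint_div [Fintype X] {P Q : X → ℝ} (hP : IsProbDist P)
    (hQ : IsProbDist Q) (hPQ : ∀ x, Q x = 0 → P x = 0) :
    Tendsto (fun t => mutInfo (bernoulliJoint t P Q) / t) (𝓝[>] 0) (𝓝 (klDiv P Q)) := by
  have hP_mix : Tendsto (fun t => klDiv P (mixture t P Q)) (𝓝[>] 0) (𝓝 (klDiv P Q)) := by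
    simpa using (continuousAt_klDiv_mixture hPQ).tendsto.mono_left nhdsWithin_le_nhds
  have hQ_mix : Tendsto (fun t => klDiv Q (mixture t P Q) / t) (𝓝[>] 0) (𝓝 0) := by
    simpa [klDiv_self, div_eq_inv_mul] using
      (hasDerivAt_klDiv_mixture (hP.2.trans hQ.2.symm) hPQ).tendsto_slope_zero_right
  have hweight : Tendsto (fun t : ℝ => 1 - t) (𝓝[>] 0) (𝓝 1) := by
    simpa using ((continuous_sub_left (1 : ℝ)).tendsto 0).mono_left nhdsWithin_le_nhds
  have hlim := hP_mix.add (hweight.mul hQ_mix)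
  rw [mul_zero, add_zero] at hlim
  refine hlim.congr' ?_
  filter_upwards [Ioo_mem_nhdsGT one_pos] with t ⟨ht0, ht1⟩
  rw [mutInfo_bernoulliJoint hP.2 hQ.2 ht0.ne' ht1.ne]
  field_simp

end Bernoulli

theorem csSup_eq_csSup_of_subset_closure {α : Type*} [ConditionallyCompleteLinearOrder α]
    [TopologicalSpace α] [OrderClosedTopology α] {A B : Set α} (hAB : A ⊆ closure B)
    (hBA : sSup A ∈ upperBounds B) (hne : B.Nonempty → A.Nonempty) : sSup A = sSup B := by
  rcases B.eq_empty_or_nonempty with rfl | hB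
  · rw [closure_empty, Set.subset_empty_iff] at hAB
    rw [hAB]
  refine le_antisymm (csSup_le (hne hB) fun a ha => ?_) (csSup_le hB hBA)
  exact closure_minimal (fun b hb => le_csSup ⟨_, hBA⟩ hb) isClosed_Iic (hAB ha)

section Ratios

variable {X Y : Type*} [Fintype X] [Fintype Y]

def klRatios (K : X → Y → ℝ) : Set ℝ :=
  {r : ℝ | ∃ P Q : X → ℝ, IsProbDist P ∧ IsProbDist Q ∧
    (∀ x, Q x = 0 → P x = 0) ∧ 0 < klDiv P Q ∧
    r = klDiv (pushforward K P) (pushforward K Q) / klDiv P Q}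

def mutInfoRatios (K : X → Y → ℝ) : Set ℝ :=
  {r : ℝ | ∃ (U : Type) (_ : Fintype U) (PUX : U × X → ℝ),
    IsProbDist PUX ∧ 0 < mutInfo PUX ∧ r = mutInfo (outputJoint K PUX) / mutInfo PUX}

theorem bddAbove_klRatios {K : X → Y → ℝ} (hK : IsChannel K) : BddAbove (klRatios K) := by
  refine ⟨1, ?_⟩
  rintro _ ⟨P, Q, hP, hQ, hPQ, hD, rfl⟩
  rw [div_le_one hD]
  exact klDiv_pushforward_le hK hP.1 hQ.1 hPQ

theorem klDiv_pushforward_le_etaKL_mul {K : X → Y → ℝ} (hK : IsChannel K) {P Q : X → ℝ}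
    (hP : IsProbDist P) (hQ : IsProbDist Q) (hPQ : ∀ x, Q x = 0 → P x = 0) :
    klDiv (pushforward K P) (pushforward K Q) ≤ etaKL K * klDiv P Q := by
  rcases (klDiv_nonneg hP hQ hPQ).eq_or_lt with h | h
  · rw [← h, mul_zero, h]
    exact klDiv_pushforward_le hK hP.1 hQ.1 hPQ
  · rw [← div_le_iff₀ h]
    exact le_csSup (bddAbove_klRatios hK) ⟨P, Q, hP, hQ, hPQ, h, rfl⟩

theorem etaKL_mem_upperBounds_mutInfoRatios {K : X → Y → ℝ} (hK : IsChannel K) :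
    etaKL K ∈ upperBounds (mutInfoRatios K) := by
  rintro _ ⟨U, _, J, hJ, hI, rfl⟩
  rw [div_le_iff₀ hI]
  exact mutInfo_outputJoint_le hK hJ fun P Q hP hQ hPQ =>
    klDiv_pushforward_le_etaKL_mul hK hP hQ hPQ

theorem klRatios_subset_closure_mutInfoRatios {K : X → Y → ℝ} (hK : IsChannel K) :
    klRatios K ⊆ closure (mutInfoRatios K) := by
  rintro _ ⟨P, Q, hP, hQ, hPQ, hD, rfl⟩
  have hX := tendsto_mutInfo_bernoulliJoint_div hP hQ hPQ
  have hY := tendsto_mutInfo_bernoulliJoint_div (isProbDist_pushforward hK hP)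
    (isProbDist_pushforward hK hQ) fun _ => pushforward_eq_zero_of_eq_zero hK hQ.1 hPQ
  have hX_pos : ∀ᶠ t in 𝓝[>] 0, 0 < mutInfo (bernoulliJoint t P Q) / t :=
    hX.eventually (eventually_gt_nhds hD)
  refine mem_closure_of_tendsto (f := fun t =>
      mutInfo (outputJoint K (bernoulliJoint t P Q)) / mutInfo (bernoulliJoint t P Q))
    ((hY.div hX hD.ne').congr' ?_) ?_
  · filter_upwards [self_mem_nhdsWithin] with t ht
    rw [outputJoint_bernoulliJoint, Pi.div_apply, div_div_div_cancel_right₀ (ne_of_gt ht)]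
  · filter_upwards [hX_pos, Ioo_mem_nhdsGT one_pos] with t hI ⟨ht0, ht1⟩
    exact ⟨Bool, inferInstance, _, isProbDist_bernoulliJoint ht0.le ht1.le hP hQ,
      (div_pos_iff_of_pos_right ht0).1 hI, rfl⟩

theorem klRatios_nonempty_of_mutInfoRatios_nonempty {K : X → Y → ℝ}
    (h : (mutInfoRatios K).Nonempty) : (klRatios K).Nonempty := by
  obtain ⟨_, U, _, J, hJ, hI, -⟩ := h
  obtain ⟨u, hu, hD⟩ := exists_klDiv_condDist_pos hJ.1 hI
  exact ⟨_, _, _, isProbDist_condDist hJ hu, isProbDist_sndMarginal hJ,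
    fun _ => condDist_eq_zero_of_sndMarginal_eq_zero hJ.1 u, hD, rfl⟩

end Ratios

/-- Mutual information characterization of the KL contraction coefficient:
`η_KL(K)` is the supremum of `I(U;Y)/I(U;X)` over all Markov chains `U → X → Y`
(with `U` a finite alphabet, joint law `P_{UX}` of `(U, X)`, and the conditional law
of `Y` given `X` equal to `K`) such that `I(U;X) > 0`. -/
theorem etaKL_eq_sup_mutInfo_ratio {X Y : Type*} [Fintype X] [Fintype Y]
    (K : X → Y → ℝ) (hK : IsChannel K) :
    etaKL K = sSup {r : ℝ | ∃ (U : Type) (_ : Fintype U) (PUX : U × X → ℝ),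
      IsProbDist PUX ∧ 0 < mutInfo PUX ∧
      r = mutInfo (fun p : U × Y => ∑ x, PUX (p.1, x) * K x p.2) / mutInfo PUX} :=
  csSup_eq_csSup_of_subset_closure (klRatios_subset_closure_mutInfoRatios hK)
    (etaKL_mem_upperBounds_mutInfoRatios hK) klRatios_nonempty_of_mutInfoRatios_nonempty
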